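/- Let A be a ring, and suppose M is an A-module with a direct sum decomposition M = ⊕_{i=1}^t M_i such that Ext¹_A(M, M) = 0 and End_A(M) has the property that for all i ≠ j, Hom_A(M_i, M_j) ≠ 0 and Hom_A(M_j, M_i) ≠ 0 implies i = j (no 2-cycles between distinct summands) and more generally there are no Hom-cycles among distinct summands. Then there exists a linear order ≤ on {1,...,t} making ({M_1,...,M_t}, ≤) a stratifying system. -/

import Mathlib

/-!
Without Hom-cycles, reachability in the digraph of nonzero maps between distinct summands is a
partial order, and any linear extension of it admits no nonzero map from a later summand to an
earlier one. Rigidity does the rest: every `Ext¹(M j, M i)` is a retract of `Ext¹(⨁ M, ⨁ M) = 0`.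
-/

open CategoryTheory Opposite Limits

namespace Relation

variable {α : Type*} {rel : α → α → Prop}

abbrev partialOrderOfAcyclic (hrel : ∀ a, ¬ TransGen rel a a) : PartialOrder α where
  le := ReflTransGen rel
  le_refl _ := .refl
  le_trans _ _ _ := .trans
  le_antisymm a b hab hba := by
    rcases reflTransGen_iff_eq_or_transGen.mp hab with rfl | hab
    · rfl
    · exact absurd (hab.trans_left hba) (hrel a)

theorem exists_linearOrder_of_acyclic (hrel : ∀ a, ¬ TransGen rel a a) :
    ∃ r : LinearOrder α, ∀ a b, rel a b → r.le a b := by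
  let _ := partialOrderOfAcyclic hrel
  exact ⟨(inferInstance : LinearOrder (LinearExtension α)),
    fun _ _ hab => toLinearExtension.monotone (ReflTransGen.single hab)⟩

end Relation

namespace CategoryTheory.Retract

variable {C D E : Type*} [Category C] [Category D] [Category E]

def bifunctorObj (F : Cᵒᵖ ⥤ D ⥤ E) {X X' : C} {Y Y' : D} (hX : Retract X X')
    (hY : Retract Y Y') :
    Retract ((F.obj (Opposite.op X)).obj Y) ((F.obj (Opposite.op X')).obj Y') :=
  ((hX.op.map F).map ((evaluation D E).obj Y)).trans (hY.map (F.obj (Opposite.op X')))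

end CategoryTheory.Retract

theorem subsingleton_ext_summands_of_rigid {A : Type} [Ring A] {ι : Type} [Finite ι]
    (M : ι → ModuleCat A) (n : ℕ)
    (hrigid : Subsingleton (((Ext ℤ (ModuleCat A) n).obj (op (⨁ M))).obj (⨁ M))) (i j : ι) :
    Subsingleton (((Ext ℤ (ModuleCat A) n).obj (op (M j))).obj (M i)) := by
  rw [← ModuleCat.isZero_iff_subsingleton] at hrigid ⊢
  exact hrigid.of_mono (Retract.bifunctorObj _ ((biproduct.bicone M).retract j)
    ((biproduct.bicone M).retract i)).i

/-- Let `M = ⊕_{i=1}^t M_i` be a rigid `A`-module (`Ext¹_A(M,M) = 0`) such that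
the digraph on `{1,...,t}` with edges `i → j` when `i ≠ j` and `Hom_A(M i, M j) ≠ 0`
is acyclic. Then there is a linear order `≤` on `{1,...,t}` making
`({M_1,...,M_t}, ≤)` a stratifying system. -/
theorem stratifying_of_rigid_no_hom_cycles (A : Type) [Ring A] (t : ℕ)
    (M : Fin t → ModuleCat A)
    (hrigid : Subsingleton (((Ext ℤ (ModuleCat A) 1).obj (op (⨁ M))).obj (⨁ M)))
    (hacyc : ∀ i : Fin t,
      ¬ Relation.TransGen (fun a b : Fin t => a ≠ b ∧ ∃ f : M a ⟶ M b, f ≠ 0) i i) :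
    ∃ r : LinearOrder (Fin t),
      (∀ i j : Fin t, r.lt i j → ∀ f : M j ⟶ M i, f = 0) ∧
      (∀ i j : Fin t, r.le i j →
        Subsingleton (((Ext ℤ (ModuleCat A) 1).obj (op (M j))).obj (M i))) := by
  obtain ⟨r, hr⟩ := Relation.exists_linearOrder_of_acyclic hacyc
  refine ⟨r, fun i j hij f => ?_, fun i j _ => subsingleton_ext_summands_of_rigid M 1 hrigid i j⟩
  by_contra hf
  -- instances given explicitly, since search would find the standard order on `Fin t`
  exact @not_le_of_gt _ r.toPreorder _ _ hij (hr j i ⟨@LT.lt.ne' _ r.toPreorder _ _ hij, f, hf⟩)
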